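/- Let C ⊆ L0+ be convex, max-closed and bounded, and let S = {f ∈ L0+ : f ≤ g a.s. for some g ∈ C} be its solid hull. Then S is solid, convex, closed in the topology of convergence in probability, and bounded. -/

import Mathlib

open MeasureTheory Filter Set

noncomputable section

variable {Ω : Type*} [MeasurableSpace Ω]

/-- The nonnegative orthant `L⁰₊` of the space `L⁰` of (a.e.-equivalence classes of)
random variables over `(Ω, ℱ, P)`. -/
def L0plus (P : Measure Ω) : Set (Ω →ₘ[P] ℝ) := {f | 0 ≤ f}

/-- The metric `(f, g) ↦ E[1 ∧ |f - g|]` inducing the topology of convergence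
in probability on `L⁰`. -/
def dist0 (P : Measure Ω) (f g : Ω →ₘ[P] ℝ) : ℝ :=
  ∫ ω, min 1 |f ω - g ω| ∂P

/-- Convergence in probability of a sequence in `L⁰`. -/
def Tendsto0 (P : Measure Ω) (f : ℕ → Ω →ₘ[P] ℝ) (g : Ω →ₘ[P] ℝ) : Prop :=
  Tendsto (fun n => dist0 P (f n) g) atTop (nhds 0)

/-- Closure of a set in `L⁰` with respect to the topology of convergence in probability. -/
def closure0 (P : Measure Ω) (C : Set (Ω →ₘ[P] ℝ)) : Set (Ω →ₘ[P] ℝ) :=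
  {f | ∀ ε : ℝ, 0 < ε → ∃ g ∈ C, dist0 P f g < ε}

/-- A set of `L⁰` is closed iff it contains its closure. -/
def IsClosed0 (P : Measure Ω) (C : Set (Ω →ₘ[P] ℝ)) : Prop :=
  closure0 P C ⊆ C

/-- Boundedness (in probability) of a set `C ⊆ L⁰₊` : `lim_{ℓ → ∞} sup_{f ∈ C} P[f > ℓ] = 0`. -/
def Bounded0 (P : Measure Ω) (C : Set (Ω →ₘ[P] ℝ)) : Prop :=
  Tendsto (fun ℓ : ℝ => ⨆ f ∈ C, P {ω | ℓ < f ω}) atTop (nhds 0)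

/-- The set `C^max` of maximal elements of `C ⊆ L⁰₊` : `f ∈ C` such that `f ≤ g` a.s.
and `g ∈ C` imply `f = g` a.s. -/
def maxSet (P : Measure Ω) (C : Set (Ω →ₘ[P] ℝ)) : Set (Ω →ₘ[P] ℝ) :=
  {f | f ∈ C ∧ ∀ g ∈ C, f ≤ g → f = g}

/-- `C` is max-closed if every maximal element of its closure already belongs to `C`. -/
def MaxClosed (P : Measure Ω) (C : Set (Ω →ₘ[P] ℝ)) : Prop :=
  maxSet P (closure0 P C) ⊆ C

/-- The pairing `⟨μ, f⟩ = ∫ f dμ ∈ [0, ∞]` between a nonnegative measure `μ` and `f ∈ L⁰₊`. -/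
def pairing {P : Measure Ω} (μ : Measure Ω) (f : Ω →ₘ[P] ℝ) : ENNReal :=
  ∫⁻ ω, ENNReal.ofReal (f ω) ∂μ

/-- The set `C^osp` of outer support points of `C ⊆ L⁰₊`: points `g ∈ C^max` for which there
is a σ-finite nonnegative measure `μ ≪ P` with `0 < sup_{f ∈ C} ⟨μ, f⟩ = ⟨μ, g⟩ < ∞`;
by convention `{0}^osp = {0}`. -/
def osp (P : Measure Ω) (C : Set (Ω →ₘ[P] ℝ)) : Set (Ω →ₘ[P] ℝ) :=
  {g | g ∈ maxSet P C ∧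
    (C = {0} ∨ ∃ μ : Measure Ω, μ ≪ P ∧ SigmaFinite μ ∧
      0 < pairing μ g ∧ pairing μ g < ⊤ ∧ (⨆ f ∈ C, pairing μ f) = pairing μ g)}

/-- The solid hull of `C ⊆ L⁰₊`. -/
def solidHull (P : Measure Ω) (C : Set (Ω →ₘ[P] ℝ)) : Set (Ω →ₘ[P] ℝ) :=
  {f | f ∈ L0plus P ∧ ∃ g ∈ C, f ≤ g}

/-- A set `S ⊆ L⁰₊` is solid if `g ∈ S` and `0 ≤ f ≤ g` imply `f ∈ S`. -/
def Solid (P : Measure Ω) (S : Set (Ω →ₘ[P] ℝ)) : Prop :=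
  ∀ g ∈ S, ∀ f : Ω →ₘ[P] ℝ, 0 ≤ f → f ≤ g → f ∈ S

/-- `(g n)` is a sequence of forward convex combinations of `(f n)`. -/
def ForwardConvexComb (P : Measure Ω) (f g : ℕ → Ω →ₘ[P] ℝ) : Prop :=
  ∀ n : ℕ, g n ∈ convexHull ℝ (f '' Set.Ici n)

end

/-!
Only closedness needs an argument. If `fₙ ≤ gₙ ∈ C` and `fₙ → f` in probability, pass to an a.s.
convergent subsequence. Near-maximizers of the bounded functional `J k = E[1 - exp (-k)]` over the
forward convex hulls `conv (gₙ, gₙ₊₁, …)` are Cauchy in probability: on `{k, k' ≤ M}` the strict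
concavity of `x ↦ 1 - exp (-x)` bounds `P[|k - k'| ≥ ε]` by the concavity gap
`J ((k + k') / 2) - (J k + J k') / 2`, which is small because the suprema of `J` over the nested
hulls converge, and boundedness of `C` controls `{k > M}`. An a.s. limit `h` of a subsequence lies
in the closure of `C`, and `f ≤ h` because a convex combination of the `gⱼ`, `j ≥ n`, dominates
their infimum. Maximizing `J` in the same way over `{k ∈ cl C | h ≤ k}` gives a
maximal element `m ≥ h` of `cl C`, since `J` is strictly increasing; max-closedness puts `m` in `C`.
-/

open MeasureTheory Filter Set Topology

namespace MeasureTheory.AEEqFun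

variable {α β 𝕜 : Type*} [MeasurableSpace α] {μ : Measure α} [TopologicalSpace β]

instance [AddCommMonoid β] [ContinuousAdd β] [PartialOrder β] [IsOrderedAddMonoid β] :
    IsOrderedAddMonoid (α →ₘ[μ] β) where
  add_le_add_left f g h k := by
    rw [← coeFn_le] at h ⊢
    filter_upwards [h, coeFn_add f k, coeFn_add g k] with ω hω hf hg
    simpa [hf, hg] using add_le_add hω (le_refl (k ω))

instance [Zero 𝕜] [Preorder 𝕜] [SMul 𝕜 β] [ContinuousConstSMul 𝕜 β] [Preorder β]
    [PosSMulMono 𝕜 β] : PosSMulMono 𝕜 (α →ₘ[μ] β) where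
  smul_le_smul_of_nonneg_left a ha f g h := by
    rw [← coeFn_le] at h ⊢
    filter_upwards [h, coeFn_smul a f, coeFn_smul a g] with ω hω hf hg
    simpa [hf, hg] using smul_le_smul_of_nonneg_left hω ha

theorem coeFn_smul_add_smul [AddCommMonoid β] [ContinuousAdd β] [SMul 𝕜 β]
    [ContinuousConstSMul 𝕜 β] (a b : 𝕜) (f g : α →ₘ[μ] β) :
    ⇑(a • f + b • g) =ᵐ[μ] fun ω => a • f ω + b • g ω := by
  filter_upwards [coeFn_add (a • f) (b • g), coeFn_smul a f, coeFn_smul b g] with ω h hf hg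
  simp [h, hf, hg]

theorem ae_nonneg [Zero β] [Preorder β] {f : α →ₘ[μ] β} (hf : 0 ≤ f) : ∀ᵐ ω ∂μ, 0 ≤ f ω := by
  filter_upwards [coeFn_le.2 hf, coeFn_zero (β := β) (μ := μ)] with ω hω h0
  rwa [h0] at hω

theorem le_of_ae_tendsto [Preorder β] [OrderClosedTopology β] {c w : α →ₘ[μ] β}
    {v : ℕ → α →ₘ[μ] β} (hv : ∀ n, c ≤ v n)
    (h : ∀ᵐ ω ∂μ, Tendsto (fun n => v n ω) atTop (𝓝 (w ω))) : c ≤ w := by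
  rw [← coeFn_le]
  filter_upwards [h, ae_all_iff.2 fun n => coeFn_le.2 (hv n)] with ω hω hcv
  exact ge_of_tendsto' hω hcv

theorem exists_ae_tendsto_of_ae_cauchySeq {E : Type*} [MetricSpace E] [CompleteSpace E]
    {v : ℕ → α →ₘ[μ] E} (h : ∀ᵐ ω ∂μ, CauchySeq fun n => v n ω) :
    ∃ w : α →ₘ[μ] E, ∀ᵐ ω ∂μ, Tendsto (fun n => v n ω) atTop (𝓝 (w ω)) := by
  obtain ⟨g, hg, hlim⟩ := exists_stronglyMeasurable_limit_of_tendsto_ae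
    (fun n => (v n).aestronglyMeasurable) (h.mono fun _ => cauchySeq_tendsto_of_complete)
  refine ⟨mk g hg.aestronglyMeasurable, ?_⟩
  filter_upwards [hlim, coeFn_mk g hg.aestronglyMeasurable] with ω hω hmk
  rwa [hmk]

end MeasureTheory.AEEqFun

section

variable {α : Type*} [MeasurableSpace α] {μ : Measure α}

theorem measure_le_ofReal_integral_div {G : α → ℝ} (hG0 : 0 ≤ᵐ[μ] G) (hG : Integrable G μ)
    {c : ℝ} (hc : 0 < c) {s : Set α} (hs : ∀ᵐ ω ∂μ, ω ∈ s → c ≤ G ω) :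
    μ s ≤ ENNReal.ofReal ((∫ ω, G ω ∂μ) / c) := by
  have hmarkov := mul_meas_ge_le_lintegral₀ (f := fun ω => ENNReal.ofReal (G ω))
    (ENNReal.measurable_ofReal.comp_aemeasurable hG.aemeasurable) (ENNReal.ofReal c)
  rw [← ofReal_integral_eq_lintegral_ofReal hG hG0] at hmarkov
  rw [ENNReal.ofReal_div_of_pos hc, ENNReal.le_div_iff_mul_le (by simp [hc]) (by simp), mul_comm]
  refine le_trans (mul_le_mul_right (measure_mono_ae ?_) _) hmarkov
  filter_upwards [hs] with ω hω hωs
  exact ENNReal.ofReal_le_ofReal (hω hωs)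

theorem exists_subseq_ae_cauchySeq {E : Type*} [PseudoMetricSpace E] {u : ℕ → α → E}
    (hu : ∀ ε > 0, ∃ N, ∀ m ≥ N, ∀ n ≥ N,
      μ {ω | ε ≤ dist (u m ω) (u n ω)} ≤ ENNReal.ofReal ε) :
    ∃ φ : ℕ → ℕ, StrictMono φ ∧ ∀ᵐ ω ∂μ, CauchySeq fun k => u (φ k) ω := by
  obtain ⟨φ, hφ, hφu⟩ := extraction_forall_of_eventually fun k : ℕ =>
    have ⟨N, hN⟩ := hu ((1 / 2) ^ k) (by positivity)
    eventually_atTop.2 ⟨N, fun j hj n hn => hN j hj n (hj.trans hn)⟩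
  set A : ℕ → Set α := fun k => {ω | (1 / 2 : ℝ) ^ k ≤ dist (u (φ k) ω) (u (φ (k + 1)) ω)}
  have hsum : ∑' k, μ (A k) ≠ ⊤ := by
    refine ne_top_of_le_ne_top ?_ (ENNReal.tsum_le_tsum fun k =>
      hφu k (φ (k + 1)) (hφ.monotone k.le_succ))
    rw [← ENNReal.ofReal_tsum_of_nonneg (fun k => by positivity) summable_geometric_two]
    exact ENNReal.ofReal_ne_top
  refine ⟨φ, hφ, ?_⟩
  filter_upwards [ae_eventually_notMem hsum] with ω hω
  refine cauchySeq_of_summable_dist (summable_geometric_two.of_norm_bounded_eventually_nat ?_)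
  filter_upwards [hω] with k hk
  rw [Real.norm_of_nonneg dist_nonneg]
  exact (not_le.1 hk).le

end

section L0

variable {Ω : Type*} [MeasurableSpace Ω] {P : Measure Ω}

theorem min_one_le_min_one_add_min_one {a b c : ℝ} (ha : 0 ≤ a) (hb : 0 ≤ b) (hc : c ≤ a + b) :
    min 1 c ≤ min 1 a + min 1 b := by
  simp only [min_def]; split_ifs <;> linarith

theorem integrable_min_one_abs_sub [IsFiniteMeasure P] (f g : Ω →ₘ[P] ℝ) :
    Integrable (fun ω => min 1 |f ω - g ω|) P := by
  refine Integrable.mono' (integrable_const 1) ?_ (Eventually.of_forall fun ω => ?_)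
  · exact (continuous_const.min continuous_abs).comp_aestronglyMeasurable
      (f.aestronglyMeasurable.sub g.aestronglyMeasurable)
  · rw [Real.norm_of_nonneg (le_min zero_le_one (abs_nonneg _))]
    exact min_le_left _ _

theorem dist0_nonneg (f g : Ω →ₘ[P] ℝ) : 0 ≤ dist0 P f g :=
  integral_nonneg fun _ => le_min zero_le_one (abs_nonneg _)

theorem dist0_triangle [IsFiniteMeasure P] (f g h : Ω →ₘ[P] ℝ) :
    dist0 P f h ≤ dist0 P f g + dist0 P g h := by
  rw [dist0, dist0, dist0,
    ← integral_add (integrable_min_one_abs_sub f g) (integrable_min_one_abs_sub g h)]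
  refine integral_mono (integrable_min_one_abs_sub f h)
    ((integrable_min_one_abs_sub f g).add (integrable_min_one_abs_sub g h)) fun ω => ?_
  exact min_one_le_min_one_add_min_one (abs_nonneg _) (abs_nonneg _) (abs_sub_le _ _ _)

theorem dist0_smul_add_smul_le [IsFiniteMeasure P] {a b : ℝ} (ha : 0 ≤ a) (hb : 0 ≤ b)
    (hab : a + b = 1) (f g f' g' : Ω →ₘ[P] ℝ) :
    dist0 P (a • f + b • g) (a • f' + b • g') ≤ dist0 P f f' + dist0 P g g' := by
  rw [dist0, dist0, dist0,
    ← integral_add (integrable_min_one_abs_sub f f') (integrable_min_one_abs_sub g g')]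
  refine integral_mono_ae (integrable_min_one_abs_sub _ _)
    ((integrable_min_one_abs_sub f f').add (integrable_min_one_abs_sub g g')) ?_
  filter_upwards [AEEqFun.coeFn_smul_add_smul a b f g, AEEqFun.coeFn_smul_add_smul a b f' g']
    with ω h h'
  refine min_one_le_min_one_add_min_one (abs_nonneg _) (abs_nonneg _) ?_
  calc |(a • f + b • g) ω - (a • f' + b • g') ω|
      = |a * (f ω - f' ω) + b * (g ω - g' ω)| := by rw [h, h', smul_eq_mul, smul_eq_mul]; ring_nf
    _ ≤ a * |f ω - f' ω| + b * |g ω - g' ω| := by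
      refine (abs_add_le _ _).trans_eq ?_
      rw [abs_mul, abs_mul, abs_of_nonneg ha, abs_of_nonneg hb]
    _ ≤ |f ω - f' ω| + |g ω - g' ω| := by
      gcongr
      · exact mul_le_of_le_one_left (abs_nonneg _) (by linarith)
      · exact mul_le_of_le_one_left (abs_nonneg _) (by linarith)

theorem measure_le_abs_sub_le_ofReal_dist0 [IsFiniteMeasure P] (f g : Ω →ₘ[P] ℝ) {ε : ℝ}
    (hε : 0 < ε) : P {ω | ε ≤ |f ω - g ω|} ≤ ENNReal.ofReal (dist0 P f g / min 1 ε) :=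
  measure_le_ofReal_integral_div (ae_of_all _ fun _ => le_min zero_le_one (abs_nonneg _))
    (integrable_min_one_abs_sub f g) (lt_min one_pos hε)
    (ae_of_all _ fun _ hω => min_le_min_left 1 hω)

theorem tendstoInMeasure_of_tendsto_dist0 [IsFiniteMeasure P] {v : ℕ → Ω →ₘ[P] ℝ}
    {w : Ω →ₘ[P] ℝ} (h : Tendsto (fun n => dist0 P w (v n)) atTop (𝓝 0)) :
    TendstoInMeasure P (fun n => ⇑(v n)) atTop w := by
  refine tendstoInMeasure_iff_dist.2 fun ε hε => ?_
  have hbound : Tendsto (fun n => ENNReal.ofReal (dist0 P w (v n) / min 1 ε)) atTop (𝓝 0) := by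
    simpa using ENNReal.tendsto_ofReal (h.div_const (min 1 ε))
  refine tendsto_of_tendsto_of_tendsto_of_le_of_le tendsto_const_nhds hbound
    (fun _ => zero_le) fun n => ?_
  simp_rw [Real.dist_eq, abs_sub_comm (v n _)]
  exact measure_le_abs_sub_le_ofReal_dist0 w (v n) hε

theorem tendsto_dist0_of_ae_tendsto [IsFiniteMeasure P] {v : ℕ → Ω →ₘ[P] ℝ} {w : Ω →ₘ[P] ℝ}
    (h : ∀ᵐ ω ∂P, Tendsto (fun n => v n ω) atTop (𝓝 (w ω))) :
    Tendsto (fun n => dist0 P w (v n)) atTop (𝓝 0) := by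
  have hlim := tendsto_integral_of_dominated_convergence (fun _ => (1 : ℝ))
    (fun n => (integrable_min_one_abs_sub w (v n)).1) (integrable_const 1)
    (fun n => ae_of_all _ fun ω => by
      rw [Real.norm_of_nonneg (le_min zero_le_one (abs_nonneg _))]
      exact min_le_left _ _)
    (h.mono fun ω hω =>
      ((continuous_const.min (continuous_const.sub continuous_id).abs).tendsto (w ω)).comp hω)
  simpa [dist0] using hlim

theorem exists_seq_ae_tendsto_of_mem_closure0 [IsFiniteMeasure P] {C : Set (Ω →ₘ[P] ℝ)}
    {f : Ω →ₘ[P] ℝ} (hf : f ∈ closure0 P C) :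
    ∃ v : ℕ → Ω →ₘ[P] ℝ, (∀ n, v n ∈ C) ∧ ∀ᵐ ω ∂P, Tendsto (fun n => v n ω) atTop (𝓝 (f ω)) := by
  choose v hvC hvf using fun n : ℕ => hf (1 / (n + 1)) Nat.one_div_pos_of_nat
  have hdist : Tendsto (fun n => dist0 P f (v n)) atTop (𝓝 0) :=
    squeeze_zero (fun n => dist0_nonneg _ _) (fun n => (hvf n).le)
      tendsto_one_div_add_atTop_nhds_zero_nat
  obtain ⟨ns, -, hns⟩ := (tendstoInMeasure_of_tendsto_dist0 hdist).exists_seq_tendsto_ae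
  exact ⟨v ∘ ns, fun n => hvC (ns n), hns⟩

theorem mem_closure0_of_ae_tendsto [IsFiniteMeasure P] {C : Set (Ω →ₘ[P] ℝ)}
    {v : ℕ → Ω →ₘ[P] ℝ} {w : Ω →ₘ[P] ℝ} (hv : ∀ n, v n ∈ C)
    (h : ∀ᵐ ω ∂P, Tendsto (fun n => v n ω) atTop (𝓝 (w ω))) : w ∈ closure0 P C := fun _ hε =>
  have ⟨N, hN⟩ := ((tendsto_dist0_of_ae_tendsto h).eventually (gt_mem_nhds hε)).exists
  ⟨v N, hv N, hN⟩

theorem closure0_closure0_subset [IsFiniteMeasure P] (C : Set (Ω →ₘ[P] ℝ)) :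
    closure0 P (closure0 P C) ⊆ closure0 P C := by
  intro f hf ε hε
  obtain ⟨g, hg, hfg⟩ := hf (ε / 2) (half_pos hε)
  obtain ⟨c, hc, hgc⟩ := hg (ε / 2) (half_pos hε)
  exact ⟨c, hc, (dist0_triangle f g c).trans_lt (by linarith)⟩

theorem closure0_subset_L0plus [IsFiniteMeasure P] {C : Set (Ω →ₘ[P] ℝ)} (hC : C ⊆ L0plus P) :
    closure0 P C ⊆ L0plus P := fun _ hf =>
  have ⟨_, hvC, hv⟩ := exists_seq_ae_tendsto_of_mem_closure0 hf
  AEEqFun.le_of_ae_tendsto (fun n => hC (hvC n)) hv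

theorem convex_closure0 [IsFiniteMeasure P] {C : Set (Ω →ₘ[P] ℝ)} (hC : Convex ℝ C) :
    Convex ℝ (closure0 P C) := by
  intro f hf g hg a b ha hb hab ε hε
  obtain ⟨f', hf', hff'⟩ := hf (ε / 2) (half_pos hε)
  obtain ⟨g', hg', hgg'⟩ := hg (ε / 2) (half_pos hε)
  exact ⟨a • f' + b • g', hC hf' hg' ha hb hab,
    (dist0_smul_add_smul_le ha hb hab f g f' g').trans_lt (by linarith)⟩

theorem Bounded0.of_measure_add_one_lt_le {C S : Set (Ω →ₘ[P] ℝ)} (hC : Bounded0 P C)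
    (h : ∀ ℓ, ∀ f ∈ S, P {ω | ℓ + 1 < f ω} ≤ ⨆ g ∈ C, P {ω | ℓ < g ω}) : Bounded0 P S := by
  have hshift : Tendsto (fun ℓ : ℝ => ⨆ g ∈ C, P {ω | ℓ - 1 < g ω}) atTop (𝓝 0) :=
    hC.comp (tendsto_atTop_add_const_right atTop (-1) tendsto_id)
  refine tendsto_of_tendsto_of_tendsto_of_le_of_le tendsto_const_nhds hshift
    (fun _ => zero_le) fun ℓ => iSup₂_le fun f hf => ?_
  simpa using h (ℓ - 1) f hf

theorem measure_add_one_lt_le_of_mem_closure0 [IsFiniteMeasure P] {C : Set (Ω →ₘ[P] ℝ)}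
    {f : Ω →ₘ[P] ℝ} (hf : f ∈ closure0 P C) (ℓ : ℝ) :
    P {ω | ℓ + 1 < f ω} ≤ ⨆ g ∈ C, P {ω | ℓ < g ω} := by
  refine ENNReal.le_of_forall_pos_le_add fun ε hε _ => ?_
  obtain ⟨c, hc, hfc⟩ := hf (min 1 ε) (lt_min one_pos hε)
  have hsplit : {ω | ℓ + 1 < f ω} ⊆ {ω | ℓ < c ω} ∪ {ω | 1 ≤ |f ω - c ω|} := by
    intro ω hω
    rcases lt_or_ge |f ω - c ω| 1 with h | h
    · exact Or.inl (show ℓ < c ω by linarith [(abs_lt.1 h).2, show ℓ + 1 < f ω from hω])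
    · exact Or.inr h
  have hfar : P {ω | 1 ≤ |f ω - c ω|} ≤ ε := by
    refine (measure_le_abs_sub_le_ofReal_dist0 f c one_pos).trans ?_
    rw [min_self, div_one, ← ENNReal.ofReal_coe_nnreal]
    exact ENNReal.ofReal_le_ofReal (hfc.le.trans (min_le_right _ _))
  calc P {ω | ℓ + 1 < f ω} ≤ P {ω | ℓ < c ω} + P {ω | 1 ≤ |f ω - c ω|} :=
        (measure_mono hsplit).trans (measure_union_le _ _)
    _ ≤ (⨆ g ∈ C, P {ω | ℓ < g ω}) + ε :=
        add_le_add (le_iSup₂ (f := fun g _ => P {ω | ℓ < g ω}) c hc) hfar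

theorem bounded0_closure0 [IsFiniteMeasure P] {C : Set (Ω →ₘ[P] ℝ)} (hC : Bounded0 P C) :
    Bounded0 P (closure0 P C) :=
  hC.of_measure_add_one_lt_le fun ℓ _ hf => measure_add_one_lt_le_of_mem_closure0 hf ℓ

end L0

section Utility

open Real

/-- Truncation at `0` keeps it bounded, hence integrable against every element of `L⁰`. -/
noncomputable def expUtility (x : ℝ) : ℝ := 1 - exp (-max x 0)

theorem continuous_expUtility : Continuous expUtility := by
  unfold expUtility; fun_prop

theorem monotone_expUtility : Monotone expUtility := fun _ _ hxy =>
  sub_le_sub_left (exp_le_exp.2 (neg_le_neg (max_le_max hxy le_rfl))) 1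

theorem expUtility_nonneg (x : ℝ) : 0 ≤ expUtility x :=
  sub_nonneg.2 (exp_le_one_iff.2 (neg_nonpos.2 (le_max_right _ _)))

theorem expUtility_le_one (x : ℝ) : expUtility x ≤ 1 :=
  sub_le_self _ (exp_pos _).le

theorem expUtility_of_nonneg {x : ℝ} (hx : 0 ≤ x) : expUtility x = 1 - exp (-x) := by
  rw [expUtility, max_eq_left hx]

theorem injOn_expUtility : InjOn expUtility (Ici 0) := fun x hx y hy h => by
  rw [expUtility_of_nonneg hx, expUtility_of_nonneg hy, sub_right_inj] at h
  exact neg_injective (exp_injective h)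

theorem expUtility_midpoint_sub {x y : ℝ} (hx : 0 ≤ x) (hy : 0 ≤ y) :
    expUtility ((x + y) / 2) - (expUtility x + expUtility y) / 2
      = (exp (-(x / 2)) - exp (-(y / 2))) ^ 2 / 2 := by
  have hsq (z : ℝ) : exp (-(z / 2)) ^ 2 = exp (-z) := by rw [← exp_nat_mul]; ring_nf
  rw [expUtility_of_nonneg hx, expUtility_of_nonneg hy, expUtility_of_nonneg (by positivity),
    ← hsq x, ← hsq y, show -((x + y) / 2) = -(x / 2) + -(y / 2) by ring, exp_add]
  ring

noncomputable def concavityModulus (M ε : ℝ) : ℝ := (exp (-(M / 2)) * (1 - exp (-(ε / 2)))) ^ 2 / 2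

theorem concavityModulus_pos (M : ℝ) {ε : ℝ} (hε : 0 < ε) : 0 < concavityModulus M ε := by
  have : 0 < 1 - exp (-(ε / 2)) := sub_pos.2 (exp_lt_one_iff.2 (by linarith))
  unfold concavityModulus
  positivity

theorem concavityModulus_le_midpoint_sub {M ε x y : ℝ} (hε : 0 ≤ ε) (hx : 0 ≤ x) (hy : 0 ≤ y)
    (hxM : x ≤ M) (hyM : y ≤ M) (hxy : ε ≤ |x - y|) :
    concavityModulus M ε ≤ expUtility ((x + y) / 2) - (expUtility x + expUtility y) / 2 := by
  wlog hle : x ≤ y generalizing x y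
  · rw [add_comm x, add_comm (expUtility x)]
    exact this hy hx hyM hxM (by rwa [abs_sub_comm]) (le_of_not_ge hle)
  rw [abs_of_nonpos (by linarith), neg_sub] at hxy
  have hε1 : 0 ≤ 1 - exp (-(ε / 2)) := sub_nonneg.2 (exp_le_one_iff.2 (by linarith))
  have hbase : exp (-(M / 2)) * (1 - exp (-(ε / 2))) ≤ exp (-(x / 2)) - exp (-(y / 2)) :=
    calc exp (-(M / 2)) * (1 - exp (-(ε / 2)))
        ≤ exp (-(x / 2)) * (1 - exp (-((y - x) / 2))) := by
          gcongr
      _ = exp (-(x / 2)) - exp (-(y / 2)) := by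
          rw [mul_sub, mul_one, ← exp_add]; ring_nf
  rw [expUtility_midpoint_sub hx hy, concavityModulus]
  exact div_le_div_of_nonneg_right (pow_le_pow_left₀ (by positivity) hbase 2) zero_le_two

end Utility

section ExpectedUtility

variable {Ω : Type*} [MeasurableSpace Ω] {P : Measure Ω}

variable (P) in
noncomputable def expectedUtility (k : Ω →ₘ[P] ℝ) : ℝ := ∫ ω, expUtility (k ω) ∂P

theorem integrable_expUtility_comp [IsFiniteMeasure P] (k : Ω →ₘ[P] ℝ) :
    Integrable (fun ω => expUtility (k ω)) P := by
  refine Integrable.mono' (integrable_const 1)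
    (continuous_expUtility.comp_aestronglyMeasurable k.aestronglyMeasurable)
    (Eventually.of_forall fun ω => ?_)
  rw [Real.norm_of_nonneg (expUtility_nonneg _)]
  exact expUtility_le_one _

theorem expectedUtility_mono [IsFiniteMeasure P] {k k' : Ω →ₘ[P] ℝ} (h : k ≤ k') :
    expectedUtility P k ≤ expectedUtility P k' :=
  integral_mono_ae (integrable_expUtility_comp k) (integrable_expUtility_comp k')
    ((AEEqFun.coeFn_le.2 h).mono fun _ hω => monotone_expUtility hω)

theorem expectedUtility_le_one [IsProbabilityMeasure P] (k : Ω →ₘ[P] ℝ) :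
    expectedUtility P k ≤ 1 :=
  (integral_mono (integrable_expUtility_comp k) (integrable_const 1)
    fun ω => expUtility_le_one (k ω)).trans_eq (by simp)

theorem eq_of_le_of_expectedUtility_le [IsFiniteMeasure P] {k k' : Ω →ₘ[P] ℝ} (hk : 0 ≤ k)
    (hle : k ≤ k') (hJ : expectedUtility P k' ≤ expectedUtility P k) : k = k' := by
  have hint := (integrable_expUtility_comp k').sub (integrable_expUtility_comp k)
  have hgap : ∫ ω, (expUtility (k' ω) - expUtility (k ω)) ∂P = 0 := by
    rw [integral_sub (integrable_expUtility_comp k') (integrable_expUtility_comp k)]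
    exact sub_eq_zero.2 (hJ.antisymm (expectedUtility_mono hle))
  have hzero := (integral_eq_zero_iff_of_nonneg_ae ((AEEqFun.coeFn_le.2 hle).mono fun _ hω =>
    sub_nonneg.2 (monotone_expUtility hω)) hint).1 hgap
  refine AEEqFun.ext ?_
  filter_upwards [hzero, AEEqFun.ae_nonneg hk, AEEqFun.coeFn_le.2 hle] with ω h0 hk0 hkk'
  exact injOn_expUtility hk0 (hk0.trans hkk') (sub_eq_zero.1 h0).symm

theorem tendsto_expectedUtility_of_ae_tendsto [IsFiniteMeasure P] {v : ℕ → Ω →ₘ[P] ℝ}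
    {w : Ω →ₘ[P] ℝ} (h : ∀ᵐ ω ∂P, Tendsto (fun n => v n ω) atTop (𝓝 (w ω))) :
    Tendsto (fun n => expectedUtility P (v n)) atTop (𝓝 (expectedUtility P w)) :=
  tendsto_integral_of_dominated_convergence (fun _ => 1)
    (fun n => (integrable_expUtility_comp (v n)).1) (integrable_const 1)
    (fun n => ae_of_all _ fun ω => by
      rw [Real.norm_of_nonneg (expUtility_nonneg _)]
      exact expUtility_le_one _)
    (h.mono fun _ hω => (continuous_expUtility.tendsto _).comp hω)

variable (P) in
noncomputable def concavityGap (x y : Ω →ₘ[P] ℝ) : ℝ :=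
  expectedUtility P ((2⁻¹ : ℝ) • x + (2⁻¹ : ℝ) • y) -
    (expectedUtility P x + expectedUtility P y) / 2

theorem measure_le_ofReal_concavityGap_div [IsFiniteMeasure P] {x y : Ω →ₘ[P] ℝ} (hx : 0 ≤ x)
    (hy : 0 ≤ y) (M : ℝ) {ε : ℝ} (hε : 0 < ε) :
    P {ω | ε ≤ |x ω - y ω| ∧ x ω ≤ M ∧ y ω ≤ M} ≤
      ENNReal.ofReal (concavityGap P x y / concavityModulus M ε) := by
  set z := (2⁻¹ : ℝ) • x + (2⁻¹ : ℝ) • y with hzxy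
  have hmean : Integrable (fun ω => (expUtility (x ω) + expUtility (y ω)) / 2) P :=
    ((integrable_expUtility_comp x).add (integrable_expUtility_comp y)).div_const 2
  set G : Ω → ℝ := fun ω => expUtility (z ω) - (expUtility (x ω) + expUtility (y ω)) / 2
  have hGgap : ∫ ω, G ω ∂P = concavityGap P x y := by
    rw [integral_sub (integrable_expUtility_comp z) hmean, integral_div,
      integral_add (integrable_expUtility_comp x) (integrable_expUtility_comp y)]
    rfl
  have hG : ∀ᵐ ω ∂P, 0 ≤ x ω ∧ 0 ≤ y ω ∧
      G ω = expUtility ((x ω + y ω) / 2) - (expUtility (x ω) + expUtility (y ω)) / 2 := by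
    filter_upwards [AEEqFun.ae_nonneg hx, AEEqFun.ae_nonneg hy,
      AEEqFun.coeFn_smul_add_smul (2⁻¹ : ℝ) 2⁻¹ x y] with ω hx0 hy0 hz
    refine ⟨hx0, hy0, ?_⟩
    simp only [G, hzxy, hz, smul_eq_mul]
    congr 2
    ring
  rw [← hGgap]
  refine measure_le_ofReal_integral_div (G := G) ?_ ((integrable_expUtility_comp z).sub hmean)
    (concavityModulus_pos M hε) ?_
  · filter_upwards [hG] with ω ⟨hx0, hy0, hGω⟩
    rw [hGω, expUtility_midpoint_sub hx0 hy0]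
    positivity
  · filter_upwards [hG] with ω ⟨hx0, hy0, hGω⟩ ⟨hxy, hxM, hyM⟩
    rw [hGω]
    exact concavityModulus_le_midpoint_sub hε.le hx0 hy0 hxM hyM hxy

theorem measure_le_abs_sub_le_concavityGap [IsFiniteMeasure P] {x y : Ω →ₘ[P] ℝ} (hx : 0 ≤ x)
    (hy : 0 ≤ y) (M : ℝ) {ε : ℝ} (hε : 0 < ε) :
    P {ω | ε ≤ |x ω - y ω|} ≤ ENNReal.ofReal (concavityGap P x y / concavityModulus M ε) +
      P {ω | M < x ω} + P {ω | M < y ω} := by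
  set A := {ω | ε ≤ |x ω - y ω| ∧ x ω ≤ M ∧ y ω ≤ M}
  have hsplit : {ω | ε ≤ |x ω - y ω|} ⊆ A ∪ {ω | M < x ω} ∪ {ω | M < y ω} := by
    intro ω hω
    rcases le_or_gt (x ω) M with hxM | hxM <;> rcases le_or_gt (y ω) M with hyM | hyM
    exacts [Or.inl (Or.inl ⟨hω, hxM, hyM⟩), Or.inr hyM, Or.inl (Or.inr hxM), Or.inr hyM]
  calc P {ω | ε ≤ |x ω - y ω|} ≤ P A + P {ω | M < x ω} + P {ω | M < y ω} :=
        (measure_mono hsplit).trans ((measure_union_le _ _).trans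
          (add_le_add_left (measure_union_le _ _) _))
    _ ≤ _ := by gcongr; exact measure_le_ofReal_concavityGap_div hx hy M hε

end ExpectedUtility

section Maximization

variable {Ω : Type*} [MeasurableSpace Ω] {P : Measure Ω} [IsProbabilityMeasure P]
  {B : Set (Ω →ₘ[P] ℝ)} {D : ℕ → Set (Ω →ₘ[P] ℝ)} {x : ℕ → Ω →ₘ[P] ℝ}

theorem bddAbove_image_expectedUtility (S : Set (Ω →ₘ[P] ℝ)) :
    BddAbove (expectedUtility P '' S) :=
  ⟨1, forall_mem_image.2 fun k _ => expectedUtility_le_one k⟩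

theorem concavityGap_le_of_near_maximizers (hanti : Antitone D) (hconv : ∀ n, Convex ℝ (D n))
    (hx : ∀ n, x n ∈ D n)
    (hxJ : ∀ n, sSup (expectedUtility P '' D n) - 1 / (n + 1) ≤ expectedUtility P (x n))
    {δ : ℝ} (hδ : 0 < δ) : ∃ N, ∀ m ≥ N, ∀ n ≥ N, concavityGap P (x m) (x n) ≤ δ := by
  set s : ℕ → ℝ := fun n => sSup (expectedUtility P '' D n)
  have hs_le {n : ℕ} {k} (hk : k ∈ D n) : expectedUtility P k ≤ s n :=
    le_csSup (bddAbove_image_expectedUtility _) (mem_image_of_mem _ hk)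
  have hs_anti : Antitone s := fun m n hmn =>
    csSup_le_csSup (bddAbove_image_expectedUtility _) ⟨_, mem_image_of_mem _ (hx n)⟩
      (image_mono (hanti hmn))
  have hs_below : BddBelow (range s) :=
    ⟨0, forall_mem_range.2 fun n => (integral_nonneg fun _ => expUtility_nonneg _).trans
      (hs_le (hx n))⟩
  obtain ⟨N, hsN, hN⟩ := (((tendsto_atTop_ciInf hs_anti hs_below).eventually
    (gt_mem_nhds (lt_add_of_pos_right _ (half_pos hδ)))).and
    (tendsto_one_div_add_atTop_nhds_zero_nat.eventually (gt_mem_nhds (half_pos hδ)))).exists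
  refine ⟨N, fun m hm n hn => ?_⟩
  have hmid : (2⁻¹ : ℝ) • x m + (2⁻¹ : ℝ) • x n ∈ D N :=
    hconv N (hanti hm (hx m)) (hanti hn (hx n)) (by norm_num) (by norm_num) (by norm_num)
  have hnear {j : ℕ} (hj : N ≤ j) : (⨅ n, s n) - 1 / (N + 1) ≤ expectedUtility P (x j) := by
    have := Nat.one_div_le_one_div (α := ℝ) hj
    linarith [ciInf_le hs_below j, show s j - 1 / (j + 1) ≤ _ from hxJ j]
  rw [concavityGap]
  linarith [hnear hm, hnear hn, hs_le hmid]

theorem cauchy_in_measure_of_near_maximizers (hB0 : B ⊆ L0plus P) (hB : Bounded0 P B)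
    (hanti : Antitone D) (hconv : ∀ n, Convex ℝ (D n)) (hDB : ∀ n, D n ⊆ B)
    (hx : ∀ n, x n ∈ D n)
    (hxJ : ∀ n, sSup (expectedUtility P '' D n) - 1 / (n + 1) ≤ expectedUtility P (x n)) :
    ∀ ε > 0, ∃ N, ∀ m ≥ N, ∀ n ≥ N,
      P {ω | ε ≤ dist (x m ω) (x n ω)} ≤ ENNReal.ofReal ε := by
  intro ε hε
  have hε3 : 0 < ε / 3 := by positivity
  obtain ⟨M, hM⟩ := (hB.eventually (gt_mem_nhds (ENNReal.ofReal_pos.2 hε3))).exists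
  obtain ⟨N, hN⟩ := concavityGap_le_of_near_maximizers hanti hconv hx hxJ
    (mul_pos (concavityModulus_pos M hε) hε3)
  refine ⟨N, fun m hm n hn => ?_⟩
  have htail {j : ℕ} (hj : N ≤ j) : P {ω | M < x j ω} ≤ ENNReal.ofReal (ε / 3) :=
    (le_iSup₂ (f := fun g _ => P {ω | M < g ω}) _ (hDB j (hx j))).trans hM.le
  have hgap : concavityGap P (x m) (x n) / concavityModulus M ε ≤ ε / 3 := by
    rw [div_le_iff₀ (concavityModulus_pos M hε), mul_comm]
    exact hN m hm n hn
  calc P {ω | ε ≤ dist (x m ω) (x n ω)}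
      ≤ ENNReal.ofReal (concavityGap P (x m) (x n) / concavityModulus M ε) +
          P {ω | M < x m ω} + P {ω | M < x n ω} := by
        simpa only [Real.dist_eq] using measure_le_abs_sub_le_concavityGap
          (hB0 (hDB m (hx m))) (hB0 (hDB n (hx n))) M hε
    _ ≤ ENNReal.ofReal (ε / 3) + ENNReal.ofReal (ε / 3) + ENNReal.ofReal (ε / 3) :=
        add_le_add (add_le_add (ENNReal.ofReal_le_ofReal hgap) (htail hm)) (htail hn)
    _ = ENNReal.ofReal ε := by
        rw [← ENNReal.ofReal_add hε3.le hε3.le, ← ENNReal.ofReal_add (by positivity) hε3.le]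
        ring_nf

theorem exists_maximizing_seq_ae_tendsto (hB0 : B ⊆ L0plus P) (hB : Bounded0 P B)
    (hanti : Antitone D) (hconv : ∀ n, Convex ℝ (D n)) (hne : ∀ n, (D n).Nonempty)
    (hDB : ∀ n, D n ⊆ B) :
    ∃ k : ℕ → Ω →ₘ[P] ℝ, ∃ h : Ω →ₘ[P] ℝ, (∀ n, k n ∈ D n) ∧
      (∀ᵐ ω ∂P, Tendsto (fun n => k n ω) atTop (𝓝 (h ω))) ∧
      ∀ z ∈ ⋂ n, D n, expectedUtility P z ≤ expectedUtility P h := by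
  have hmax (n : ℕ) : ∃ x ∈ D n,
      sSup (expectedUtility P '' D n) - 1 / (n + 1) < expectedUtility P x := by
    obtain ⟨_, ⟨x, hx, rfl⟩, hlt⟩ :=
      exists_lt_of_lt_csSup ((hne n).image _) (sub_lt_self _ (Nat.one_div_pos_of_nat (α := ℝ)))
    exact ⟨x, hx, hlt⟩
  choose x hx hxJ using hmax
  obtain ⟨φ, hφ, hcauchy⟩ := exists_subseq_ae_cauchySeq
    (cauchy_in_measure_of_near_maximizers hB0 hB hanti hconv hDB hx fun n => (hxJ n).le)
  obtain ⟨h, hh⟩ := AEEqFun.exists_ae_tendsto_of_ae_cauchySeq hcauchy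
  refine ⟨x ∘ φ, h, fun n => hanti hφ.le_apply (hx (φ n)), hh, fun z hz => ?_⟩
  have hlow : Tendsto (fun n : ℕ => expectedUtility P z - 1 / (n + 1)) atTop
      (𝓝 (expectedUtility P z)) := by
    simpa using (tendsto_const_nhds (x := expectedUtility P z)).sub
      (tendsto_one_div_add_atTop_nhds_zero_nat (𝕜 := ℝ))
  refine le_of_tendsto_of_tendsto' hlow (tendsto_expectedUtility_of_ae_tendsto hh) fun n => ?_
  have hzJ := le_csSup (bddAbove_image_expectedUtility _)
    (mem_image_of_mem _ (mem_iInter.1 hz (φ n)))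
  have := Nat.one_div_le_one_div (α := ℝ) (hφ.le_apply (x := n))
  linarith [hxJ (φ n)]

end Maximization

section SolidHull

variable {Ω : Type*} [MeasurableSpace Ω] {P : Measure Ω} {C : Set (Ω →ₘ[P] ℝ)}

theorem solid_solidHull (C : Set (Ω →ₘ[P] ℝ)) : Solid P (solidHull P C) :=
  fun _ ⟨_, c, hc, hgc⟩ _ hf0 hfg => ⟨hf0, c, hc, hfg.trans hgc⟩

theorem convex_solidHull (hconv : Convex ℝ C) : Convex ℝ (solidHull P C) := by
  rintro x ⟨hx0, gx, hgx, hxg⟩ y ⟨hy0, gy, hgy, hyg⟩ a b ha hb hab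
  refine ⟨?_, a • gx + b • gy, hconv hgx hgy ha hb hab, by gcongr⟩
  show 0 ≤ a • x + b • y
  exact add_nonneg (smul_nonneg ha hx0) (smul_nonneg hb hy0)

theorem bounded0_solidHull (hbdd : Bounded0 P C) : Bounded0 P (solidHull P C) :=
  hbdd.of_measure_add_one_lt_le fun ℓ f ⟨_, g, hg, hfg⟩ =>
    calc P {ω | ℓ + 1 < f ω} ≤ P {ω | ℓ < g ω} :=
          measure_mono_ae <| (AEEqFun.coeFn_le.2 hfg).mono fun ω hω (hlt : ℓ + 1 < f ω) =>
            show ℓ < g ω by linarith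
      _ ≤ ⨆ g ∈ C, P {ω | ℓ < g ω} := le_iSup₂ (f := fun g _ => P {ω | ℓ < g ω}) g hg

theorem convex_setOf_ae_forall_le (S : Ω → Set ℝ) :
    Convex ℝ {k : Ω →ₘ[P] ℝ | ∀ᵐ ω ∂P, ∀ c ∈ S ω, c ≤ k ω} := by
  intro k hk k' hk' a b ha hb hab
  filter_upwards [hk, hk', AEEqFun.coeFn_smul_add_smul a b k k'] with ω h h' heq c hc
  rw [heq, smul_eq_mul, smul_eq_mul]
  calc c = a * c + b * c := by rw [← add_mul, hab, one_mul]
    _ ≤ a * k ω + b * k' ω := by gcongr; exacts [h c hc, h' c hc]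

variable [IsProbabilityMeasure P]

theorem exists_mem_closure0_ge_of_ae_tendsto (hC0 : C ⊆ L0plus P) (hconv : Convex ℝ C)
    (hbdd : Bounded0 P C) {g v : ℕ → Ω →ₘ[P] ℝ} {f : Ω →ₘ[P] ℝ} (hgC : ∀ n, g n ∈ C)
    (hvg : ∀ n, v n ≤ g n) (hvf : ∀ᵐ ω ∂P, Tendsto (fun n => v n ω) atTop (𝓝 (f ω))) :
    ∃ h ∈ closure0 P C, f ≤ h := by
  set D : ℕ → Set (Ω →ₘ[P] ℝ) := fun n => convexHull ℝ (g '' Ici n)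
  have hDC n : D n ⊆ C := convexHull_min (image_subset_iff.2 fun j _ => hgC j) hconv
  have hDinf n : D n ⊆ {k | ∀ᵐ ω ∂P, ∀ c ∈ lowerBounds ((g · ω) '' Ici n), c ≤ k ω} :=
    convexHull_min (image_subset_iff.2 fun j hj => ae_of_all _ fun ω c hc =>
      hc (mem_image_of_mem _ hj)) (convex_setOf_ae_forall_le _)
  obtain ⟨k, h, hkD, hkh, -⟩ := exists_maximizing_seq_ae_tendsto hC0 hbdd
    (fun m n hmn => convexHull_mono (image_mono (Ici_subset_Ici.2 hmn)))
    (fun n => convex_convexHull ℝ _)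
    (fun n => ⟨g n, subset_convexHull ℝ _ (mem_image_of_mem _ self_mem_Ici)⟩) hDC
  refine ⟨h, mem_closure0_of_ae_tendsto (fun n => hDC n (hkD n)) hkh, ?_⟩
  rw [← AEEqFun.coeFn_le]
  filter_upwards [hvf, hkh, ae_all_iff.2 fun n => hDinf n (hkD n),
    ae_all_iff.2 fun n => AEEqFun.coeFn_le.2 (hvg n)] with ω hvω hkω hkinf hvgω
  refine le_of_forall_pos_le_add fun δ hδ => ?_
  obtain ⟨N, hN⟩ := eventually_atTop.1 (hvω.eventually (lt_mem_nhds (sub_lt_self (f ω) hδ)))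
  have hkN : ∀ n ≥ N, f ω - δ ≤ k n ω := fun n hn => hkinf n _ <| forall_mem_image.2
    fun j hj => ((hN j (hn.trans hj)).le.trans (hvgω j))
  linarith [ge_of_tendsto hkω (eventually_atTop.2 ⟨N, hkN⟩)]

theorem exists_mem_maxSet_closure0_ge (hC0 : C ⊆ L0plus P) (hconv : Convex ℝ C)
    (hbdd : Bounded0 P C) {h : Ω →ₘ[P] ℝ} (hh : h ∈ closure0 P C) :
    ∃ m ∈ maxSet P (closure0 P C), h ≤ m := by
  obtain ⟨k, m, hk, hkm, hJ⟩ := exists_maximizing_seq_ae_tendsto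
    (D := fun _ => closure0 P C ∩ Ici h) (closure0_subset_L0plus hC0) (bounded0_closure0 hbdd)
    antitone_const (fun _ => (convex_closure0 hconv).inter (convex_Ici h))
    (fun _ => ⟨h, hh, self_mem_Ici⟩) (fun _ => inter_subset_left)
  have hm : m ∈ closure0 P C :=
    closure0_closure0_subset C (mem_closure0_of_ae_tendsto (fun n => (hk n).1) hkm)
  have hhm : h ≤ m := AEEqFun.le_of_ae_tendsto (fun n => (hk n).2) hkm
  refine ⟨m, ⟨hm, fun z hz hmz => ?_⟩, hhm⟩
  exact eq_of_le_of_expectedUtility_le (closure0_subset_L0plus hC0 hm) hmz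
    (hJ z (mem_iInter.2 fun _ => ⟨hz, hhm.trans hmz⟩))

theorem isClosed0_solidHull (hC0 : C ⊆ L0plus P) (hconv : Convex ℝ C) (hmaxcl : MaxClosed P C)
    (hbdd : Bounded0 P C) : IsClosed0 P (solidHull P C) := by
  intro f hf
  obtain ⟨v, hvS, hvf⟩ := exists_seq_ae_tendsto_of_mem_closure0 hf
  choose g hgC hvg using fun n => (hvS n).2
  obtain ⟨h, hh, hfh⟩ := exists_mem_closure0_ge_of_ae_tendsto hC0 hconv hbdd hgC hvg hvf
  obtain ⟨m, hm, hhm⟩ := exists_mem_maxSet_closure0_ge hC0 hconv hbdd hh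
  exact ⟨closure0_subset_L0plus (fun _ hk => hk.1) hf, m, hmaxcl hm, hfh.trans hhm⟩

end SolidHull

/-- If `C ⊆ L⁰₊` is convex, max-closed and bounded, then its solid hull
`S = {f ∈ L⁰₊ : f ≤ g a.s. for some g ∈ C}` is solid, convex, closed (in the topology of
convergence in probability) and bounded. -/
theorem statement6 {Ω : Type*} [MeasurableSpace Ω] (P : Measure Ω) [IsProbabilityMeasure P]
    (C : Set (Ω →ₘ[P] ℝ)) (hCL0 : C ⊆ L0plus P)
    (hconv : Convex ℝ C) (hmaxcl : MaxClosed P C) (hbdd : Bounded0 P C) :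
    Solid P (solidHull P C) ∧ Convex ℝ (solidHull P C) ∧
      IsClosed0 P (solidHull P C) ∧ Bounded0 P (solidHull P C) :=
  ⟨solid_solidHull C, convex_solidHull hconv, isClosed0_solidHull hCL0 hconv hmaxcl hbdd,
    bounded0_solidHull hbdd⟩
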